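/- Let G be an n-vertex bipartite graph, k a positive integer, S* a fixed vertex cover of G, H the perturbation of G with respect to S*, and μ = 2nk + 2n − 1. Then: (i) for all vertex covers S and T of G of size at most k, S and T belong to the same connected component of R_k(G) if and only if f(S) and f(T) belong to the same connected component of R_μ(H); (ii) for all vertex covers Ŝ and T̂ of H of size at most μ, Ŝ and T̂ belong to the same connected component of R_μ(H) if and only if f⁻¹(Ŝ) and f⁻¹(T̂) belong to the same connected component of R_k(G). -/

import Mathlib

/-- A set of vertices is a vertex cover of `G` if it contains at least one
endpoint of every edge. -/
def IsVC {α : Type*} (G : SimpleGraph α) (S : Finset α) : Prop :=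
  ∀ ⦃u v : α⦄, G.Adj u v → u ∈ S ∨ v ∈ S

/-- Vertex type of the perturbation `H` of an `n`-vertex graph `G` with respect
to `S*`: each vertex `v ∈ S*` gets `2n` twin copies and each `v ∉ S*` gets
`2n + 1` twin copies. -/
abbrev PV (V : Type) [DecidableEq V] (n : ℕ) (Sstar : Finset V) : Type :=
  {p : V × Fin (2 * n + 1) // p.1 ∈ Sstar → (p.2 : ℕ) < 2 * n}

/-- The perturbation `H` of `G` with respect to `S*`: a copy of `u` and a copy
of `v` are adjacent iff `uv` is an edge of `G` (in particular copies of the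
same vertex are non-adjacent). -/
def perturb {V : Type} [DecidableEq V] (G : SimpleGraph V) (n : ℕ) (Sstar : Finset V) :
    SimpleGraph (PV V n Sstar) where
  Adj p q := G.Adj p.1.1 q.1.1
  symm := ⟨fun _ _ h => G.symm.symm _ _ h⟩
  loopless := ⟨fun _ h => G.loopless.irrefl _ h⟩

/-- `f(v)`: the set of copies of `v` in the perturbation. -/
def fcopy {V : Type} [DecidableEq V] [Fintype V] (n : ℕ) (Sstar : Finset V) (v : V) :
    Finset (PV V n Sstar) :=
  Finset.univ.filter (fun p => p.1.1 = v)

/-- `f(X) = ⋃_{v ∈ X} f(v)`. -/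
def fset {V : Type} [DecidableEq V] [Fintype V] (n : ℕ) (Sstar : Finset V) (X : Finset V) :
    Finset (PV V n Sstar) :=
  Finset.univ.filter (fun p => p.1.1 ∈ X)

/-- `f⁻¹(X̂) = {v : f(v) ⊆ X̂}`. -/
def finv {V : Type} [DecidableEq V] [Fintype V] (n : ℕ) (Sstar : Finset V)
    (Xh : Finset (PV V n Sstar)) : Finset V :=
  Finset.univ.filter (fun v => fcopy n Sstar v ⊆ Xh)

/-- A reconfiguration sequence in `R_k(G)` from `S` to `T`. -/
def ReconfSeq {α : Type*} [DecidableEq α] (G : SimpleGraph α) (k : ℕ) (S T : Finset α)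
    (t : ℕ) (Q : ℕ → Finset α) : Prop :=
  Q 0 = S ∧ Q t = T ∧ (∀ i ≤ t, IsVC G (Q i) ∧ (Q i).card ≤ k) ∧
    ∀ i < t, (symmDiff (Q i) (Q (i + 1))).card = 1

/-- `S` and `T` lie in the same connected component of `R_k(G)`. -/
def SameComp {α : Type*} [DecidableEq α] (G : SimpleGraph α) (k : ℕ) (S T : Finset α) : Prop :=
  ∃ t Q, ReconfSeq G k S T t Q

/-- `distR G k S T` : the length of a shortest reconfiguration sequence from
`S` to `T` in `R_k(G)` (`⊤` if none exists). -/
noncomputable def distR {α : Type*} [DecidableEq α] (G : SimpleGraph α) (k : ℕ)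
    (S T : Finset α) : ℕ∞ :=
  sInf {m : ℕ∞ | ∃ t : ℕ, (t : ℕ∞) = m ∧ ∃ Q : ℕ → Finset α, ReconfSeq G k S T t Q}

/-!
Copies of a vertex are twins, so for a vertex cover `X̂` of `H` the union `f(f⁻¹(X̂)) ⊆ X̂` of the
copy classes it contains is still a vertex cover, from which `X̂` is reached by adding vertices.
Under `f` a step `S → S ∪ {v}` of `R_k(G)` becomes the addition of the copies of `v` one at a
time, within budget since `|f(S)| ≤ (2n+1)|S| ≤ 2nk + n ≤ μ`. Conversely a step of `R_μ(H)`
changes `f⁻¹` by at most one vertex, and `2n|f⁻¹(X̂)| ≤ |X̂| < 2n(k+1)` keeps it within budget `k`.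
-/

lemma IsVC.mono {α : Type*} {G : SimpleGraph α} {A B : Finset α} (h : IsVC G A) (hAB : A ⊆ B) :
    IsVC G B :=
  fun _ _ huv => (h huv).imp (@hAB _) (@hAB _)

section Reconfiguration

variable {α : Type*} [DecidableEq α] {G : SimpleGraph α} {k : ℕ} {A B S T U : Finset α}

def IsReconfNode (G : SimpleGraph α) (k : ℕ) (S : Finset α) : Prop :=
  IsVC G S ∧ S.card ≤ k

/-- The reconfiguration graph `R_k(G)`, with all finsets as vertices: those that are not vertex
covers of size at most `k` are isolated. -/
def reconfGraph (G : SimpleGraph α) (k : ℕ) : SimpleGraph (Finset α) where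
  Adj S T := IsReconfNode G k S ∧ IsReconfNode G k T ∧ (symmDiff S T).card = 1
  symm := ⟨fun _ _ h => ⟨h.2.1, h.1, by rw [symmDiff_comm]; exact h.2.2⟩⟩
  loopless := ⟨fun _ h => by simp at h⟩

lemma reconfGraph_adj :
    (reconfGraph G k).Adj S T ↔
      IsReconfNode G k S ∧ IsReconfNode G k T ∧ (symmDiff S T).card = 1 :=
  Iff.rfl

lemma IsReconfNode.of_reachable (hS : IsReconfNode G k S) (h : (reconfGraph G k).Reachable S T) :
    IsReconfNode G k T := by
  rw [SimpleGraph.reachable_iff_reflTransGen] at h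
  induction h with
  | refl => exact hS
  | tail _ hUT _ => exact (reconfGraph_adj.1 hUT).2.1

lemma sameComp_iff_reachable :
    SameComp G k S T ↔ IsReconfNode G k S ∧ (reconfGraph G k).Reachable S T := by
  constructor
  · rintro ⟨t, Q, rfl, rfl, hnode, hstep⟩
    refine ⟨hnode 0 (Nat.zero_le t), ?_⟩
    suffices ∀ i ≤ t, (reconfGraph G k).Reachable (Q 0) (Q i) from this t le_rfl
    intro i hi
    induction i with
    | zero => rfl
    | succ i ih =>
      exact (ih (by omega)).trans
        (reconfGraph_adj.2 ⟨hnode i (by omega), hnode (i + 1) hi, hstep i hi⟩).reachable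
  · rintro ⟨hS, h⟩
    rw [SimpleGraph.reachable_iff_reflTransGen] at h
    induction h with
    | refl => exact ⟨0, fun _ => S, rfl, rfl, fun _ _ => hS, fun _ h => absurd h (Nat.not_lt_zero _)⟩
    | @tail U T _ hUT ih =>
      obtain ⟨t, Q, h0, ht, hnode, hstep⟩ := ih
      obtain ⟨-, hT, hUT⟩ := reconfGraph_adj.1 hUT
      refine ⟨t + 1, fun i => if i ≤ t then Q i else T, by simp [h0], by simp, ?_, ?_⟩
      · intro i hi
        by_cases hit : i ≤ t
        · simpa [hit] using hnode i hit
        · simpa [hit, IsReconfNode] using hT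
      · intro i hi
        by_cases hit : i + 1 ≤ t
        · simpa [hit, show i ≤ t by omega] using hstep i hit
        · obtain rfl : i = t := by omega
          simpa [ht] using hUT

lemma SameComp.symm (h : SameComp G k S T) : SameComp G k T S := by
  obtain ⟨hS, hST⟩ := sameComp_iff_reachable.1 h
  exact sameComp_iff_reachable.2 ⟨hS.of_reachable hST, hST.symm⟩

lemma SameComp.trans (h₁ : SameComp G k S T) (h₂ : SameComp G k T U) : SameComp G k S U := by
  obtain ⟨hS, hST⟩ := sameComp_iff_reachable.1 h₁
  exact sameComp_iff_reachable.2 ⟨hS, hST.trans (sameComp_iff_reachable.1 h₂).2⟩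

lemma sameComp_of_card_symmDiff_le_one (hS : IsReconfNode G k S) (hT : IsReconfNode G k T)
    (h : (symmDiff S T).card ≤ 1) : SameComp G k S T := by
  refine sameComp_iff_reachable.2 ⟨hS, ?_⟩
  rcases Nat.le_one_iff_eq_zero_or_eq_one.1 h with h | h
  · rw [Finset.card_eq_zero, ← Finset.bot_eq_empty, symmDiff_eq_bot] at h
    rw [h]
  · exact (reconfGraph_adj.2 ⟨hS, hT, h⟩).reachable

lemma sameComp_of_subset (hA : IsVC G A) (hAB : A ⊆ B) (hB : B.card ≤ k) : SameComp G k A B := by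
  suffices ∀ D : Finset α, (A ∪ D).card ≤ k → SameComp G k A (A ∪ D) by
    simpa [Finset.union_eq_right.2 hAB] using this B (by rwa [Finset.union_eq_right.2 hAB])
  intro D
  induction D using Finset.induction_on with
  | empty =>
    intro h
    simp only [Finset.union_empty] at h ⊢
    exact sameComp_of_card_symmDiff_le_one ⟨hA, h⟩ ⟨hA, h⟩ (by simp)
  | insert x D _ ih =>
    intro h
    rw [Finset.union_insert] at h ⊢
    have hsub := Finset.subset_insert x (A ∪ D)
    have hAD : IsReconfNode G k (A ∪ D) :=
      ⟨hA.mono Finset.subset_union_left, (Finset.card_le_card hsub).trans h⟩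
    refine (ih hAD.2).trans (sameComp_of_card_symmDiff_le_one hAD ⟨hAD.1.mono hsub, h⟩ ?_)
    rw [symmDiff_of_le hsub, Finset.card_sdiff_of_subset hsub]
    have := Finset.card_insert_le x (A ∪ D)
    omega

lemma subset_or_subset_of_card_symmDiff_le_one (h : (symmDiff S T).card ≤ 1) : S ⊆ T ∨ T ⊆ S := by
  by_contra! hST
  obtain ⟨x, hxS, hxT⟩ := Finset.not_subset.1 hST.1
  obtain ⟨y, hyT, hyS⟩ := Finset.not_subset.1 hST.2
  have hx : x ∈ symmDiff S T := Finset.mem_symmDiff.2 (Or.inl ⟨hxS, hxT⟩)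
  have hy : y ∈ symmDiff S T := Finset.mem_symmDiff.2 (Or.inr ⟨hyT, hyS⟩)
  exact hyS (Finset.card_le_one.1 h x hx y hy ▸ hxS)

lemma SameComp.map {β : Type*} [DecidableEq β] {G' : SimpleGraph β} {k' : ℕ}
    (f : Finset α → Finset β) (hnode : ∀ S, IsReconfNode G k S → IsReconfNode G' k' (f S))
    (hadj : ∀ S T, (reconfGraph G k).Adj S T → SameComp G' k' (f S) (f T))
    (h : SameComp G k S T) : SameComp G' k' (f S) (f T) := by
  obtain ⟨hS, hST⟩ := sameComp_iff_reachable.1 h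
  refine sameComp_iff_reachable.2 ⟨hnode S hS, ?_⟩
  rw [SimpleGraph.reachable_iff_reflTransGen] at hST ⊢
  exact hST.lift' f fun U W hUW => (SimpleGraph.reachable_iff_reflTransGen _ _).1
    (sameComp_iff_reachable.1 (hadj U W hUW)).2

end Reconfiguration

section Perturbation

variable {V : Type} [Fintype V] [DecidableEq V] {G : SimpleGraph V} {n k : ℕ} {Sstar : Finset V}

@[simp]
lemma mem_fcopy {v : V} {p : PV V n Sstar} : p ∈ fcopy n Sstar v ↔ p.1.1 = v := by
  simp [fcopy]

@[simp]
lemma mem_fset {X : Finset V} {p : PV V n Sstar} : p ∈ fset n Sstar X ↔ p.1.1 ∈ X := by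
  simp [fset]

@[simp]
lemma mem_finv {Xh : Finset (PV V n Sstar)} {v : V} :
    v ∈ finv n Sstar Xh ↔ fcopy n Sstar v ⊆ Xh := by
  simp [finv]

lemma card_fcopy_le (v : V) : (fcopy n Sstar v).card ≤ 2 * n + 1 := by
  simpa using Finset.card_le_card_of_injOn (t := Finset.univ) (fun p : PV V n Sstar => p.1.2)
    (fun _ _ => Finset.mem_coe.2 (Finset.mem_univ _))
    fun p hp q hq hpq => Subtype.ext (Prod.ext ((mem_fcopy.1 hp).trans (mem_fcopy.1 hq).symm) hpq)

lemma le_card_fcopy (v : V) : 2 * n ≤ (fcopy n Sstar v).card := by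
  simpa using Finset.card_le_card_of_injOn (s := Finset.univ) (t := fcopy n Sstar v)
    (fun j : Fin (2 * n) => (⟨(v, ⟨j, by omega⟩), fun _ => j.2⟩ : PV V n Sstar))
    (fun _ _ => mem_fcopy.2 rfl)
    fun i _ j _ hij => Fin.ext (congrArg (fun p : PV V n Sstar => (p.1.2 : ℕ)) hij)

lemma card_fset (X : Finset V) :
    (fset n Sstar X).card = ∑ v ∈ X, (fcopy n Sstar v).card := by
  have : fset n Sstar X = X.biUnion (fcopy n Sstar) := by ext; simp
  rw [this, Finset.card_biUnion]
  intro v _ w _ hvw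
  exact Finset.disjoint_left.2 fun _ hv hw => hvw ((mem_fcopy.1 hv).symm.trans (mem_fcopy.1 hw))

lemma two_mul_card_le_card_fset (X : Finset V) : 2 * n * X.card ≤ (fset n Sstar X).card := by
  rw [card_fset, mul_comm]
  simpa using Finset.card_nsmul_le_sum X _ _ fun v _ => le_card_fcopy (Sstar := Sstar) v

lemma card_fset_le (hcard : Fintype.card V = n) {X : Finset V} (hX : X.card ≤ k) :
    (fset n Sstar X).card ≤ 2 * n * k + 2 * n - 1 := by
  have hXn : X.card ≤ n := hcard ▸ X.card_le_univ
  calc (fset n Sstar X).card ≤ 2 * n * X.card + X.card := by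
        rw [card_fset]
        refine (Finset.sum_le_card_nsmul X _ _ fun v _ => card_fcopy_le v).trans_eq ?_
        rw [smul_eq_mul]
        ring
    _ ≤ 2 * n * k + n := Nat.add_le_add (Nat.mul_le_mul_left _ hX) hXn
    _ ≤ 2 * n * k + 2 * n - 1 := by rcases Nat.eq_zero_or_pos n with rfl | hn <;> omega

lemma fset_mono {X Y : Finset V} (h : X ⊆ Y) : fset n Sstar X ⊆ fset n Sstar Y :=
  fun _ hp => mem_fset.2 (h (mem_fset.1 hp))

lemma fset_finv_subset (Xh : Finset (PV V n Sstar)) : fset n Sstar (finv n Sstar Xh) ⊆ Xh :=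
  fun _ hp => mem_finv.1 (mem_fset.1 hp) (mem_fcopy.2 rfl)

lemma finv_fset (hcard : Fintype.card V = n) (X : Finset V) :
    finv n Sstar (fset n Sstar X) = X := by
  ext v
  refine ⟨fun hv => ?_, fun hv => mem_finv.2 fun p hp => mem_fset.2 (mem_fcopy.1 hp ▸ hv)⟩
  have hn : 0 < n := hcard ▸ Fintype.card_pos_iff.2 ⟨v⟩
  exact mem_fset.1 (mem_finv.1 hv ((mem_fcopy (p := ⟨(v, 0), fun _ => by simpa⟩)).2 rfl))

lemma card_finv_le (hcard : Fintype.card V = n) {Xh : Finset (PV V n Sstar)}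
    (hXh : Xh.card ≤ 2 * n * k + 2 * n - 1) : (finv n Sstar Xh).card ≤ k := by
  rcases Nat.eq_zero_or_pos n with rfl | hn
  · exact (Finset.card_le_univ _).trans (hcard.le.trans (Nat.zero_le k))
  have h : 2 * n * (finv n Sstar Xh).card ≤ Xh.card :=
    (two_mul_card_le_card_fset _).trans (Finset.card_le_card (fset_finv_subset Xh))
  have hk : 2 * n * (finv n Sstar Xh).card < 2 * n * (k + 1) := by rw [mul_add]; omega
  exact Nat.lt_succ_iff.1 (Nat.lt_of_mul_lt_mul_left hk)

lemma isVC_fset {X : Finset V} (h : IsVC G X) : IsVC (perturb G n Sstar) (fset n Sstar X) :=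
  fun _ _ hpq => (h hpq).imp mem_fset.2 mem_fset.2

lemma isVC_finv {Xh : Finset (PV V n Sstar)} (h : IsVC (perturb G n Sstar) Xh) :
    IsVC G (finv n Sstar Xh) := by
  intro u v huv
  by_contra! hcon
  obtain ⟨p, hp, hpX⟩ := Finset.not_subset.1 (mt mem_finv.2 hcon.1)
  obtain ⟨q, hq, hqX⟩ := Finset.not_subset.1 (mt mem_finv.2 hcon.2)
  have hpq : (perturb G n Sstar).Adj p q := by
    change G.Adj p.1.1 q.1.1
    rwa [mem_fcopy.1 hp, mem_fcopy.1 hq]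
  exact (h hpq).elim hpX hqX

lemma symmDiff_finv_subset (Xh Yh : Finset (PV V n Sstar)) :
    symmDiff (finv n Sstar Xh) (finv n Sstar Yh) ⊆ (symmDiff Xh Yh).image fun p => p.1.1 := by
  intro v hv
  simp only [Finset.mem_symmDiff, mem_finv, Finset.mem_image] at hv ⊢
  rcases hv with ⟨hX, hY⟩ | ⟨hY, hX⟩
  · obtain ⟨p, hp, hpY⟩ := Finset.not_subset.1 hY
    exact ⟨p, Or.inl ⟨hX hp, hpY⟩, mem_fcopy.1 hp⟩
  · obtain ⟨p, hp, hpX⟩ := Finset.not_subset.1 hX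
    exact ⟨p, Or.inr ⟨hY hp, hpX⟩, mem_fcopy.1 hp⟩

lemma sameComp_fset (hcard : Fintype.card V = n) {S T : Finset V} (h : SameComp G k S T) :
    SameComp (perturb G n Sstar) (2 * n * k + 2 * n - 1) (fset n Sstar S) (fset n Sstar T) := by
  refine h.map _ (fun X hX => ⟨isVC_fset hX.1, card_fset_le hcard hX.2⟩) fun X Y hXY => ?_
  obtain ⟨hX, hY, hd⟩ := reconfGraph_adj.1 hXY
  rcases subset_or_subset_of_card_symmDiff_le_one hd.le with hsub | hsub
  · exact sameComp_of_subset (isVC_fset hX.1) (fset_mono hsub) (card_fset_le hcard hY.2)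
  · exact (sameComp_of_subset (isVC_fset hY.1) (fset_mono hsub) (card_fset_le hcard hX.2)).symm

lemma sameComp_finv (hcard : Fintype.card V = n) {Sh Th : Finset (PV V n Sstar)}
    (h : SameComp (perturb G n Sstar) (2 * n * k + 2 * n - 1) Sh Th) :
    SameComp G k (finv n Sstar Sh) (finv n Sstar Th) := by
  refine h.map _ (fun Xh hXh => ⟨isVC_finv hXh.1, card_finv_le hcard hXh.2⟩) fun Xh Yh hXY => ?_
  obtain ⟨hX, hY, hd⟩ := reconfGraph_adj.1 hXY
  exact sameComp_of_card_symmDiff_le_one ⟨isVC_finv hX.1, card_finv_le hcard hX.2⟩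
    ⟨isVC_finv hY.1, card_finv_le hcard hY.2⟩
    ((Finset.card_le_card (symmDiff_finv_subset Xh Yh)).trans (Finset.card_image_le.trans hd.le))

lemma sameComp_fset_finv {Xh : Finset (PV V n Sstar)} (hXh : IsVC (perturb G n Sstar) Xh)
    (hcard : Xh.card ≤ k) : SameComp (perturb G n Sstar) k (fset n Sstar (finv n Sstar Xh)) Xh :=
  sameComp_of_subset (isVC_fset (isVC_finv hXh)) (fset_finv_subset Xh) hcard

end Perturbation

theorem stmt8_general {V : Type} [Fintype V] [DecidableEq V] (G : SimpleGraph V)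
    (n : ℕ) (hn : Fintype.card V = n)
    (Sstar : Finset V) (k : ℕ) :
    (∀ S T : Finset V, IsVC G S → IsVC G T → S.card ≤ k → T.card ≤ k →
      (SameComp G k S T ↔
        SameComp (perturb G n Sstar) (2 * n * k + 2 * n - 1)
          (fset n Sstar S) (fset n Sstar T))) ∧
    (∀ Sh Th : Finset (PV V n Sstar),
      IsVC (perturb G n Sstar) Sh → IsVC (perturb G n Sstar) Th →
      Sh.card ≤ 2 * n * k + 2 * n - 1 → Th.card ≤ 2 * n * k + 2 * n - 1 →
      (SameComp (perturb G n Sstar) (2 * n * k + 2 * n - 1) Sh Th ↔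
        SameComp G k (finv n Sstar Sh) (finv n Sstar Th))) := by
  refine ⟨fun S T _ _ _ _ => ⟨sameComp_fset hn, fun h => ?_⟩,
    fun Sh Th hSh hTh hShc hThc => ⟨sameComp_finv hn, fun h => ?_⟩⟩
  · simpa only [finv_fset hn] using sameComp_finv hn h
  · exact ((sameComp_fset_finv hSh hShc).symm.trans (sameComp_fset hn h)).trans
      (sameComp_fset_finv hTh hThc)

/-- With `H` the perturbation of the `n`-vertex bipartite
graph `G` w.r.t. a vertex cover `S*`, and `μ = 2nk + 2n − 1`:
(i) vertex covers `S`, `T` of `G` of size at most `k` lie in the same connected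
component of `R_k(G)` iff `f(S)` and `f(T)` lie in the same connected component
of `R_μ(H)`; (ii) vertex covers `Ŝ`, `T̂` of `H` of size at most `μ` lie in the
same connected component of `R_μ(H)` iff `f⁻¹(Ŝ)` and `f⁻¹(T̂)` lie in the same
connected component of `R_k(G)`. -/
theorem stmt8 {V : Type} [Fintype V] [DecidableEq V] (G : SimpleGraph V)
    (hbip : G.Colorable 2) (n : ℕ) (hn : Fintype.card V = n)
    (Sstar : Finset V) (hSstar : IsVC G Sstar) (k : ℕ) (hk : 0 < k) :
    (∀ S T : Finset V, IsVC G S → IsVC G T → S.card ≤ k → T.card ≤ k →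
      (SameComp G k S T ↔
        SameComp (perturb G n Sstar) (2 * n * k + 2 * n - 1)
          (fset n Sstar S) (fset n Sstar T))) ∧
    (∀ Sh Th : Finset (PV V n Sstar),
      IsVC (perturb G n Sstar) Sh → IsVC (perturb G n Sstar) Th →
      Sh.card ≤ 2 * n * k + 2 * n - 1 → Th.card ≤ 2 * n * k + 2 * n - 1 →
      (SameComp (perturb G n Sstar) (2 * n * k + 2 * n - 1) Sh Th ↔
        SameComp G k (finv n Sstar Sh) (finv n Sstar Th))) :=
  stmt8_general G n hn Sstar k
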